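/- arXiv:2207.11159 — 6 statements merged into one kernel-verified Lean document; each statement's English description precedes it below -/
import Mathlib

section
/- Let N, M, T ≥ 1, let 0 ≤ p̲ ≤ p̄ be reals, let A be a real M×N matrix, let α ∈ ℝ^N and let B be a real N×N matrix with zᵀBz ≤ 0 for all z ∈ ℝ^N. Define D(p) = α + Bp and r(p) = ⟨p, D(p)⟩. Let γ ∈ ℝ^M and let φ : ℝ^M → ℝ be concave. If p_1, …, p_T ∈ [p̲, p̄]^N satisfy Σ_{t=1}^T A D(p_t) ≤ Tγ componentwise, then the average price p' := (1/T) Σ_{t=1}^T p_t satisfies p' ∈ [p̲, p̄]^N, A D(p') ≤ γ componentwise, and Σ_{t=1}^T r(p_t) + T φ((1/T) Σ_{t=1}^T A D(p_t)) ≤ T r(p') + T φ(A D(p')). In particular, the fluid program over T price vectors admits a stationary optimal solution. -/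
open Matrix

lemma dotProduct_sum' {N T : ℕ} (v : Fin N → ℝ) (f : Fin T → Fin N → ℝ) :
    v ⬝ᵥ (∑ t, f t) = ∑ t, v ⬝ᵥ f t := by
  simp only [dotProduct, Finset.sum_apply, Finset.mul_sum]
  exact Finset.sum_comm

lemma sum_dotProduct' {N T : ℕ} (f : Fin T → Fin N → ℝ) (v : Fin N → ℝ) :
    (∑ t, f t) ⬝ᵥ v = ∑ t, f t ⬝ᵥ v := by
  simp only [dotProduct, Finset.sum_apply, Finset.sum_mul]
  exact Finset.sum_comm

lemma mulVec_sumF {M N T : ℕ} (A : Matrix (Fin M) (Fin N) ℝ) (f : Fin T → Fin N → ℝ) :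
    A *ᵥ (∑ t, f t) = ∑ t, A *ᵥ f t := by
  ext j
  rw [Finset.sum_apply]
  exact dotProduct_sum' (A j) f

theorem stmt1 (N M T : ℕ) (hN : 1 ≤ N) (hM : 1 ≤ M) (hT : 1 ≤ T)
    (pl pu : ℝ) (hpl : 0 ≤ pl) (hplu : pl ≤ pu)
    (A : Matrix (Fin M) (Fin N) ℝ) (α : Fin N → ℝ) (B : Matrix (Fin N) (Fin N) ℝ)
    (hB : ∀ z : Fin N → ℝ, z ⬝ᵥ (B *ᵥ z) ≤ 0)
    (γ : Fin M → ℝ) (φ : (Fin M → ℝ) → ℝ) (hφ : ConcaveOn ℝ Set.univ φ)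
    (p : Fin T → Fin N → ℝ)
    (hbox : ∀ t, ∀ i, pl ≤ p t i ∧ p t i ≤ pu)
    (hcons : ∀ j, (∑ t, A *ᵥ (α + B *ᵥ p t)) j ≤ (T : ℝ) * γ j) :
    (∀ i, pl ≤ ((T : ℝ)⁻¹ • ∑ t, p t) i ∧ ((T : ℝ)⁻¹ • ∑ t, p t) i ≤ pu) ∧
    (∀ j, (A *ᵥ (α + B *ᵥ ((T : ℝ)⁻¹ • ∑ t, p t))) j ≤ γ j) ∧
    (∑ t, (p t) ⬝ᵥ (α + B *ᵥ p t)) + (T : ℝ) * φ ((T : ℝ)⁻¹ • ∑ t, A *ᵥ (α + B *ᵥ p t))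
      ≤ (T : ℝ) * (((T : ℝ)⁻¹ • ∑ t, p t) ⬝ᵥ (α + B *ᵥ ((T : ℝ)⁻¹ • ∑ t, p t)))
        + (T : ℝ) * φ (A *ᵥ (α + B *ᵥ ((T : ℝ)⁻¹ • ∑ t, p t))) := by
  have hT0 : (0:ℝ) < (T:ℝ) := by exact_mod_cast hT
  have hTne : (T:ℝ) ≠ 0 := ne_of_gt hT0
  set s : Fin N → ℝ := ∑ t, p t with hs
  have key : α + B *ᵥ ((T : ℝ)⁻¹ • s) = (T : ℝ)⁻¹ • ∑ t, (α + B *ᵥ p t) := by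
    have h1 : ∑ t : Fin T, (α + B *ᵥ p t) = (T : ℝ) • α + B *ᵥ s := by
      rw [hs, mulVec_sumF]
      ext i
      simp [Finset.sum_apply, Finset.sum_add_distrib, mul_comm]
    rw [h1, smul_add, mulVec_smul, smul_smul, inv_mul_cancel₀ hTne, one_smul]
  have key2 : A *ᵥ (α + B *ᵥ ((T : ℝ)⁻¹ • s)) = (T : ℝ)⁻¹ • ∑ t, A *ᵥ (α + B *ᵥ p t) := by
    rw [key, mulVec_smul, mulVec_sumF]
  refine ⟨?_, ?_, ?_⟩
  · intro i
    have hsum : s i = ∑ t, p t i := by simp [hs]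
    constructor
    · have h : (T:ℝ) * pl ≤ s i := by
        rw [hsum]
        calc (T:ℝ) * pl = ∑ _t : Fin T, pl := by simp [mul_comm]
          _ ≤ ∑ t, p t i := Finset.sum_le_sum fun t _ => (hbox t i).1
      have h2 : (T:ℝ)⁻¹ * ((T:ℝ) * pl) ≤ (T:ℝ)⁻¹ * s i :=
        mul_le_mul_of_nonneg_left h (by positivity)
      rw [inv_mul_cancel_left₀ hTne] at h2
      simpa [Pi.smul_apply, smul_eq_mul] using h2
    · have h : s i ≤ (T:ℝ) * pu := by
        rw [hsum]
        calc ∑ t, p t i ≤ ∑ _t : Fin T, pu := Finset.sum_le_sum fun t _ => (hbox t i).2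
          _ = (T:ℝ) * pu := by simp [mul_comm]
      have h2 : (T:ℝ)⁻¹ * s i ≤ (T:ℝ)⁻¹ * ((T:ℝ) * pu) :=
        mul_le_mul_of_nonneg_left h (by positivity)
      rw [inv_mul_cancel_left₀ hTne] at h2
      simpa [Pi.smul_apply, smul_eq_mul] using h2
  · intro j
    rw [key2]
    have h2 : (T:ℝ)⁻¹ * (∑ t, A *ᵥ (α + B *ᵥ p t)) j ≤ (T:ℝ)⁻¹ * ((T:ℝ) * γ j) :=
      mul_le_mul_of_nonneg_left (hcons j) (by positivity)
    rw [inv_mul_cancel_left₀ hTne] at h2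
    simpa [Pi.smul_apply, smul_eq_mul] using h2
  · have hφeq : φ ((T : ℝ)⁻¹ • ∑ t, A *ᵥ (α + B *ᵥ p t))
        = φ (A *ᵥ (α + B *ᵥ ((T : ℝ)⁻¹ • s))) := by rw [key2]
    rw [hφeq]
    have hquad : (T:ℝ) * ∑ t, (p t) ⬝ᵥ (B *ᵥ p t) ≤ s ⬝ᵥ (B *ᵥ s) := by
      have hexp : ∀ t u : Fin T, (p t - p u) ⬝ᵥ (B *ᵥ (p t - p u))
          = (p t) ⬝ᵥ (B *ᵥ p t) - (p t) ⬝ᵥ (B *ᵥ p u)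
            - (p u) ⬝ᵥ (B *ᵥ p t) + (p u) ⬝ᵥ (B *ᵥ p u) := by
        intro t u
        rw [mulVec_sub, sub_dotProduct, dotProduct_sub, dotProduct_sub]
        ring
      have hle : ∑ t, ∑ u, ((p t) ⬝ᵥ (B *ᵥ p t) - (p t) ⬝ᵥ (B *ᵥ p u)
          - (p u) ⬝ᵥ (B *ᵥ p t) + (p u) ⬝ᵥ (B *ᵥ p u)) ≤ 0 := by
        apply Finset.sum_nonpos
        intro t _
        apply Finset.sum_nonpos
        intro u _
        rw [← hexp t u]
        exact hB _
      have hss : s ⬝ᵥ (B *ᵥ s) = ∑ t, ∑ u, (p t) ⬝ᵥ (B *ᵥ p u) := by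
        rw [hs, sum_dotProduct']
        refine Finset.sum_congr rfl fun t _ => ?_
        rw [mulVec_sumF, dotProduct_sum']
      have hss' : s ⬝ᵥ (B *ᵥ s) = ∑ t, ∑ u, (p u) ⬝ᵥ (B *ᵥ p t) := by
        rw [hss]; exact Finset.sum_comm
      have e1 : (∑ t : Fin T, ∑ _u : Fin T, (p t) ⬝ᵥ (B *ᵥ p t))
          = (T:ℝ) * ∑ t, (p t) ⬝ᵥ (B *ᵥ p t) := by
        simp [Finset.sum_const, Finset.card_univ, Fintype.card_fin, Finset.mul_sum, mul_comm]
      have e2 : (∑ _t : Fin T, ∑ u : Fin T, (p u) ⬝ᵥ (B *ᵥ p u))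
          = (T:ℝ) * ∑ u, (p u) ⬝ᵥ (B *ᵥ p u) := by
        simp [Finset.sum_const, Finset.card_univ, Fintype.card_fin, mul_comm]
      have hdist : ∑ t, ∑ u, ((p t) ⬝ᵥ (B *ᵥ p t) - (p t) ⬝ᵥ (B *ᵥ p u)
          - (p u) ⬝ᵥ (B *ᵥ p t) + (p u) ⬝ᵥ (B *ᵥ p u))
          = (∑ t : Fin T, ∑ _u : Fin T, (p t) ⬝ᵥ (B *ᵥ p t))
            - (∑ t, ∑ u, (p t) ⬝ᵥ (B *ᵥ p u))
            - (∑ t, ∑ u, (p u) ⬝ᵥ (B *ᵥ p t))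
            + (∑ _t : Fin T, ∑ u : Fin T, (p u) ⬝ᵥ (B *ᵥ p u)) := by
        simp [Finset.sum_sub_distrib, Finset.sum_add_distrib]
      rw [hdist, e1, e2, ← hss, ← hss'] at hle
      linarith
    have hlin : (∑ t, (p t) ⬝ᵥ α) = s ⬝ᵥ α := by rw [hs, sum_dotProduct']
    have hrhs : (T : ℝ) * (((T : ℝ)⁻¹ • s) ⬝ᵥ (α + B *ᵥ ((T : ℝ)⁻¹ • s)))
        = s ⬝ᵥ α + (T:ℝ)⁻¹ * (s ⬝ᵥ (B *ᵥ s)) := by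
      rw [dotProduct_add, smul_dotProduct, mulVec_smul, dotProduct_smul, smul_dotProduct]
      simp only [smul_eq_mul]
      field_simp
    have hlhs : (∑ t, (p t) ⬝ᵥ (α + B *ᵥ p t))
        = s ⬝ᵥ α + ∑ t, (p t) ⬝ᵥ (B *ᵥ p t) := by
      rw [← hlin, ← Finset.sum_add_distrib]
      refine Finset.sum_congr rfl fun t _ => ?_
      rw [dotProduct_add]
    have h3 : ∑ t, (p t) ⬝ᵥ (B *ᵥ p t) ≤ (T:ℝ)⁻¹ * (s ⬝ᵥ (B *ᵥ s)) := by
      have h4 : (T:ℝ)⁻¹ * ((T:ℝ) * ∑ t, (p t) ⬝ᵥ (B *ᵥ p t))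
          ≤ (T:ℝ)⁻¹ * (s ⬝ᵥ (B *ᵥ s)) := mul_le_mul_of_nonneg_left hquad (by positivity)
      rwa [inv_mul_cancel_left₀ hTne] at h4
    rw [hlhs, hrhs]
    linarith
end

section
/- Let (Ω, F, P) be a probability space, let N, M, T ≥ 1, let 0 ≤ p̲ ≤ p̄, let A be a real M×N matrix, let α ∈ ℝ^N and B a real N×N matrix with zᵀBz ≤ 0 for all z ∈ ℝ^N, and set D(p) = α + Bp, r(p) = ⟨p, D(p)⟩. Let γ ∈ ℝ^M and let φ : ℝ^M → ℝ be concave and continuous. Let p_1, …, p_T : Ω → ℝ^N be measurable random vectors taking values in [p̲, p̄]^N almost surely, and suppose E[Σ_{t=1}^T A D(p_t)] ≤ Tγ componentwise. Then E[Σ_{t=1}^T r(p_t) + T φ((1/T) Σ_{t=1}^T A D(p_t))] ≤ T · sup{ r(p) + φ(A D(p)) : p ∈ [p̲, p̄]^N, A D(p) ≤ γ componentwise }, and the supremum is over a nonempty set. -/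
/-!
Average the random prices over time, `p̄ ω = T⁻¹ ∑ₜ pₜ ω`. Since `r` is concave and
`p ↦ A D(p)` is affine, the objective is bounded pointwise by `T (r + φ ∘ A D)(p̄ ω)`, and
Jensen's inequality bounds the expectation of the latter by its value at `E p̄`. This mean
price lies in the (convex) price box, and its consumption `A D(E p̄) = T⁻¹ E ∑ₜ A D(pₜ)` is
at most `γ`, so it is feasible for the fluid program.
-/

open Matrix MeasureTheory

namespace AffineMap

theorem integral_comp_comm {E F : Type*} [NormedAddCommGroup E] [NormedSpace ℝ E]
    [FiniteDimensional ℝ E] [NormedAddCommGroup F] [NormedSpace ℝ F] [CompleteSpace F]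
    {Ω : Type*} [MeasurableSpace Ω] {μ : Measure Ω} [IsProbabilityMeasure μ]
    (f : E →ᵃ[ℝ] F) {X : Ω → E} (hX : Integrable X μ) :
    ∫ ω, f (X ω) ∂μ = f (∫ ω, X ω ∂μ) := by
  let L : E →L[ℝ] F := LinearMap.toContinuousLinearMap f.linear
  obtain ⟨c, hf⟩ : ∃ c, ∀ x, f x = L x + c := ⟨f 0, fun x => congrFun f.decomp x⟩
  simp only [hf]
  rw [integral_add (L.integrable_comp hX) (integrable_const _), integral_const,
    probReal_univ, one_smul, L.integral_comp_comm hX]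

theorem map_inv_card_smul_sum {E F : Type*} [AddCommGroup E] [Module ℝ E]
    [AddCommGroup F] [Module ℝ F] {ι : Type*} [Fintype ι] [Nonempty ι]
    (f : E →ᵃ[ℝ] F) (x : ι → E) :
    f ((Fintype.card ι : ℝ)⁻¹ • ∑ i, x i) = (Fintype.card ι : ℝ)⁻¹ • ∑ i, f (x i) := by
  have hcard : (Fintype.card ι : ℝ) ≠ 0 := by positivity
  obtain ⟨c, hf⟩ : ∃ c, ∀ x, f x = f.linear x + c := ⟨f 0, fun x => congrFun f.decomp x⟩
  simp only [hf, map_smul, map_sum, Finset.sum_add_distrib, Finset.sum_const,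
    Finset.card_univ, smul_add, ← Nat.cast_smul_eq_nsmul ℝ, smul_smul,
    inv_mul_cancel₀ hcard, one_smul]

end AffineMap

section Averages

variable {E : Type*} [AddCommGroup E] [Module ℝ E] {ι : Type*} [Fintype ι] [Nonempty ι]

theorem ConcaveOn.sum_le_card_mul_map_inv_card_smul_sum {f : E → ℝ}
    (hf : ConcaveOn ℝ Set.univ f) (x : ι → E) :
    ∑ i, f (x i) ≤ Fintype.card ι * f ((Fintype.card ι : ℝ)⁻¹ • ∑ i, x i) := by
  have hcard : (0 : ℝ) < Fintype.card ι := by positivity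
  have hJensen := hf.le_map_sum (t := Finset.univ) (w := fun _ => (Fintype.card ι : ℝ)⁻¹)
    (p := x) (fun _ _ => by positivity) (by simp [hcard.ne']) (fun _ _ => Set.mem_univ _)
  rw [← Finset.smul_sum, ← Finset.smul_sum, smul_eq_mul] at hJensen
  rwa [← inv_mul_le_iff₀ hcard]

theorem Convex.inv_card_smul_sum_mem {s : Set E} (hs : Convex ℝ s) {x : ι → E}
    (hx : ∀ i, x i ∈ s) : (Fintype.card ι : ℝ)⁻¹ • ∑ i, x i ∈ s := by
  rw [Finset.smul_sum]
  exact hs.sum_mem (fun _ _ => by positivity) (by simp) (fun i _ => hx i)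

theorem MeasureTheory.ae_inv_card_smul_sum_mem {Ω : Type*} [MeasurableSpace Ω]
    {μ : Measure Ω} {p : ι → Ω → E} {K : Set E} (hKc : Convex ℝ K)
    (hpK : ∀ i, ∀ᵐ ω ∂μ, p i ω ∈ K) :
    ∀ᵐ ω ∂μ, (Fintype.card ι : ℝ)⁻¹ • ∑ i, p i ω ∈ K := by
  filter_upwards [ae_all_iff.2 hpK] with ω hω
  exact hKc.inv_card_smul_sum_mem hω

end Averages

theorem MeasureTheory.Integrable.continuous_comp_of_ae_mem_compact {Ω E F : Type*}
    [MeasurableSpace Ω] {μ : Measure Ω} [IsFiniteMeasure μ] [TopologicalSpace E]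
    [NormedAddCommGroup F] {g : E → F} {X : Ω → E} {K : Set E} (hK : IsCompact K)
    (hg : Continuous g) (hX : AEStronglyMeasurable X μ) (hXK : ∀ᵐ ω ∂μ, X ω ∈ K) :
    Integrable (fun ω => g (X ω)) μ := by
  obtain ⟨C, hC⟩ := hK.exists_bound_of_continuousOn hg.continuousOn
  exact .of_bound (hg.comp_aestronglyMeasurable hX) C (hXK.mono fun ω h => hC _ h)

theorem Matrix.concaveOn_dotProduct_add_mulVec {n : Type*} [Fintype n] (α : n → ℝ)
    {B : Matrix n n ℝ} (hB : ∀ z : n → ℝ, z ⬝ᵥ (B *ᵥ z) ≤ 0) :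
    ConcaveOn ℝ Set.univ (fun q : n → ℝ => q ⬝ᵥ (α + B *ᵥ q)) := by
  refine ⟨convex_univ, fun x _ y _ a b ha hb hab => ?_⟩
  have hxy := hB (x - y)
  obtain rfl : b = 1 - a := by linarith
  simp only [mulVec_add, mulVec_smul, mulVec_sub, dotProduct_add, add_dotProduct,
    smul_dotProduct, dotProduct_smul, sub_dotProduct, dotProduct_sub, smul_eq_mul] at *
  nlinarith [mul_nonneg ha hb]

section FluidProgram

variable {m n : Type*} [Fintype n] (A : Matrix m n ℝ) (α : n → ℝ) (B : Matrix n n ℝ)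
  (φ : (m → ℝ) → ℝ)

def consumptionMap : (n → ℝ) →ᵃ[ℝ] (m → ℝ) where
  toFun q := A *ᵥ (α + B *ᵥ q)
  linear := (A * B).mulVecLin
  map_vadd' q v := by
    simp only [vadd_eq_add, mulVec_add, mulVecLin_apply, ← mulVec_mulVec]
    abel

@[simp]
theorem consumptionMap_apply (q : n → ℝ) : consumptionMap A α B q = A *ᵥ (α + B *ᵥ q) :=
  rfl

def fluidObjective (q : n → ℝ) : ℝ := q ⬝ᵥ (α + B *ᵥ q) + φ (A *ᵥ (α + B *ᵥ q))

def fluidFeasibleSet (pl pu : ℝ) (γ : m → ℝ) : Set (n → ℝ) :=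
  {q | (∀ i, pl ≤ q i ∧ q i ≤ pu) ∧ ∀ j, (A *ᵥ (α + B *ᵥ q)) j ≤ γ j}

variable {A α B φ}

theorem concaveOn_fluidObjective (hB : ∀ z : n → ℝ, z ⬝ᵥ (B *ᵥ z) ≤ 0)
    (hφ : ConcaveOn ℝ Set.univ φ) : ConcaveOn ℝ Set.univ (fluidObjective A α B φ) :=
  (concaveOn_dotProduct_add_mulVec α hB).add (hφ.comp_affineMap (consumptionMap A α B))

theorem continuous_fluidObjective (hφ : Continuous φ) :
    Continuous (fluidObjective A α B φ) := by
  unfold fluidObjective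
  fun_prop

theorem fluidObjective_le_sSup (hφ : Continuous φ) {pl pu : ℝ} {γ : m → ℝ} {q : n → ℝ}
    (hq : q ∈ fluidFeasibleSet A α B pl pu γ) :
    fluidObjective A α B φ q ≤
      sSup (fluidObjective A α B φ '' fluidFeasibleSet A α B pl pu γ) := by
  have hbox : fluidFeasibleSet A α B pl pu γ ⊆ Set.Icc (fun _ => pl) (fun _ => pu) :=
    fun q hq => ⟨fun i => (hq.1 i).1, fun i => (hq.1 i).2⟩
  have hbdd : BddAbove (fluidObjective A α B φ '' fluidFeasibleSet A α B pl pu γ) :=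
    (isCompact_Icc.image (continuous_fluidObjective hφ)).bddAbove.mono (Set.image_mono hbox)
  exact le_csSup hbdd ⟨q, hq, rfl⟩

theorem sum_add_card_mul_le_card_mul_fluidObjective (hB : ∀ z : n → ℝ, z ⬝ᵥ (B *ᵥ z) ≤ 0)
    {ι : Type*} [Fintype ι] [Nonempty ι] (x : ι → n → ℝ) :
    ∑ i, x i ⬝ᵥ (α + B *ᵥ x i) +
        Fintype.card ι * φ ((Fintype.card ι : ℝ)⁻¹ • ∑ i, A *ᵥ (α + B *ᵥ x i)) ≤
      Fintype.card ι * fluidObjective A α B φ ((Fintype.card ι : ℝ)⁻¹ • ∑ i, x i) := by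
  have hrevenue := (concaveOn_dotProduct_add_mulVec α hB).sum_le_card_mul_map_inv_card_smul_sum x
  have hconsumption := (consumptionMap A α B).map_inv_card_smul_sum x
  simp only [consumptionMap_apply] at hconsumption
  rw [fluidObjective, hconsumption, mul_add]
  linarith

end FluidProgram

section RandomPrices

variable {Ω : Type*} [MeasurableSpace Ω] {μ : Measure Ω} [IsProbabilityMeasure μ]
  {ι : Type*} [Fintype ι] [Nonempty ι] {n : Type*} [Fintype n] {p : ι → Ω → n → ℝ}

theorem integrable_inv_card_smul_sum {K : Set (n → ℝ)} (hK : IsCompact K) (hKc : Convex ℝ K)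
    (hmeas : ∀ i, Measurable (p i)) (hpK : ∀ i, ∀ᵐ ω ∂μ, p i ω ∈ K) :
    Integrable (fun ω => (Fintype.card ι : ℝ)⁻¹ • ∑ i, p i ω) μ :=
  .continuous_comp_of_ae_mem_compact (X := fun ω => (Fintype.card ι : ℝ)⁻¹ • ∑ i, p i ω) hK
    continuous_id (Measurable.aestronglyMeasurable (by fun_prop))
    (ae_inv_card_smul_sum_mem hKc hpK)

variable {m : Type*} {A : Matrix m n ℝ} {α : n → ℝ} {B : Matrix n n ℝ}

theorem integral_mem_fluidFeasibleSet {pl pu : ℝ} {γ : m → ℝ}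
    (hmeas : ∀ i, Measurable (p i))
    (hbox : ∀ i, ∀ᵐ ω ∂μ, p i ω ∈ Set.Icc (fun _ => pl) (fun _ => pu))
    (hcons : ∀ j, ∫ ω, (∑ i, A *ᵥ (α + B *ᵥ p i ω)) j ∂μ ≤ Fintype.card ι * γ j) :
    ∫ ω, (Fintype.card ι : ℝ)⁻¹ • ∑ i, p i ω ∂μ ∈ fluidFeasibleSet A α B pl pu γ := by
  have hint := integrable_inv_card_smul_sum isCompact_Icc (convex_Icc _ _) hmeas hbox
  have hmem := (convex_Icc (𝕜 := ℝ) _ _).integral_mem isClosed_Icc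
    (ae_inv_card_smul_sum_mem (convex_Icc _ _) hbox) hint
  refine ⟨fun k => ⟨hmem.1 k, hmem.2 k⟩, fun j => ?_⟩
  -- the `j`-th consumption is a real affine function of the price, so it commutes with `∫`
  let Dj : (n → ℝ) →ᵃ[ℝ] ℝ := (LinearMap.proj j).toAffineMap.comp (consumptionMap A α B)
  calc Dj (∫ ω, (Fintype.card ι : ℝ)⁻¹ • ∑ i, p i ω ∂μ)
      = ∫ ω, Dj ((Fintype.card ι : ℝ)⁻¹ • ∑ i, p i ω) ∂μ := (Dj.integral_comp_comm hint).symm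
    _ = (Fintype.card ι : ℝ)⁻¹ * ∫ ω, (∑ i, A *ᵥ (α + B *ᵥ p i ω)) j ∂μ := by
      simp only [Dj, AffineMap.comp_apply, AffineMap.map_inv_card_smul_sum,
        consumptionMap_apply, LinearMap.coe_toAffineMap, LinearMap.proj_apply,
        Finset.sum_apply, smul_eq_mul]
      exact integral_const_mul _ _
    _ ≤ (Fintype.card ι : ℝ)⁻¹ * (Fintype.card ι * γ j) := by gcongr; exact hcons j
    _ = γ j := by field_simp

theorem integral_le_card_mul_fluidObjective_integral {φ : (m → ℝ) → ℝ}
    (hB : ∀ z : n → ℝ, z ⬝ᵥ (B *ᵥ z) ≤ 0) (hφ : ConcaveOn ℝ Set.univ φ) (hφc : Continuous φ)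
    {K : Set (n → ℝ)} (hK : IsCompact K) (hKc : Convex ℝ K)
    (hmeas : ∀ i, Measurable (p i)) (hpK : ∀ i, ∀ᵐ ω ∂μ, p i ω ∈ K) :
    ∫ ω, (∑ i, p i ω ⬝ᵥ (α + B *ᵥ p i ω) +
        Fintype.card ι * φ ((Fintype.card ι : ℝ)⁻¹ • ∑ i, A *ᵥ (α + B *ᵥ p i ω))) ∂μ ≤
      Fintype.card ι *
        fluidObjective A α B φ (∫ ω, (Fintype.card ι : ℝ)⁻¹ • ∑ i, p i ω ∂μ) := by
  set c : ℝ := (Fintype.card ι : ℝ)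
  let G : (ι → n → ℝ) → ℝ := fun x =>
    ∑ i, x i ⬝ᵥ (α + B *ᵥ x i) + c * φ (c⁻¹ • ∑ i, A *ᵥ (α + B *ᵥ x i))
  have hprices_int : Integrable (fun ω => G (fun i => p i ω)) μ :=
    .continuous_comp_of_ae_mem_compact (isCompact_univ_pi fun _ => hK) (by fun_prop)
      (measurable_pi_lambda _ hmeas).aestronglyMeasurable
      (by filter_upwards [ae_all_iff.2 hpK] with ω hω i _ using hω i)
  have hmean_int := integrable_inv_card_smul_sum hK hKc hmeas hpK
  have hobj_int : Integrable (fun ω => fluidObjective A α B φ (c⁻¹ • ∑ i, p i ω)) μ :=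
    .continuous_comp_of_ae_mem_compact (X := fun ω => c⁻¹ • ∑ i, p i ω) hK
      (continuous_fluidObjective hφc) hmean_int.aestronglyMeasurable
      (ae_inv_card_smul_sum_mem hKc hpK)
  calc _ ≤ ∫ ω, c * fluidObjective A α B φ (c⁻¹ • ∑ i, p i ω) ∂μ :=
        integral_mono hprices_int (hobj_int.const_mul c) fun ω =>
          sum_add_card_mul_le_card_mul_fluidObjective hB (p · ω)
    _ = c * ∫ ω, fluidObjective A α B φ (c⁻¹ • ∑ i, p i ω) ∂μ := integral_const_mul _ _
    _ ≤ _ := by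
      gcongr
      exact (concaveOn_fluidObjective hB hφ).le_map_integral
        (continuous_fluidObjective hφc).continuousOn isClosed_univ
        (.of_forall fun _ => Set.mem_univ _) hmean_int hobj_int

end RandomPrices

theorem stmt2_general {Ω : Type*} [MeasurableSpace Ω] (P : Measure Ω) [IsProbabilityMeasure P]
    (N M T : ℕ) (hT : 1 ≤ T)
    (pl pu : ℝ)
    (A : Matrix (Fin M) (Fin N) ℝ) (α : Fin N → ℝ) (B : Matrix (Fin N) (Fin N) ℝ)
    (hB : ∀ z : Fin N → ℝ, z ⬝ᵥ (B *ᵥ z) ≤ 0)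
    (γ : Fin M → ℝ) (φ : (Fin M → ℝ) → ℝ)
    (hφ : ConcaveOn ℝ Set.univ φ) (hφc : Continuous φ)
    (p : Fin T → Ω → Fin N → ℝ)
    (hmeas : ∀ t, Measurable (p t))
    (hbox : ∀ t, ∀ᵐ ω ∂P, ∀ i, pl ≤ p t ω i ∧ p t ω i ≤ pu)
    (hcons : ∀ j, (∫ ω, (∑ t, A *ᵥ (α + B *ᵥ p t ω)) j ∂P) ≤ (T : ℝ) * γ j) :
    ({q : Fin N → ℝ | (∀ i, pl ≤ q i ∧ q i ≤ pu) ∧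
        ∀ j, (A *ᵥ (α + B *ᵥ q)) j ≤ γ j}).Nonempty ∧
    (∫ ω, ((∑ t, (p t ω) ⬝ᵥ (α + B *ᵥ p t ω)) +
        (T : ℝ) * φ ((T : ℝ)⁻¹ • ∑ t, A *ᵥ (α + B *ᵥ p t ω))) ∂P)
      ≤ (T : ℝ) * sSup ((fun q : Fin N → ℝ =>
            q ⬝ᵥ (α + B *ᵥ q) + φ (A *ᵥ (α + B *ᵥ q))) ''
          {q : Fin N → ℝ | (∀ i, pl ≤ q i ∧ q i ≤ pu) ∧
            ∀ j, (A *ᵥ (α + B *ᵥ q)) j ≤ γ j}) := by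
  have : Nonempty (Fin T) := Fin.pos_iff_nonempty.mp hT
  have hbox_Icc : ∀ t, ∀ᵐ ω ∂P, p t ω ∈ Set.Icc (fun _ => pl) (fun _ => pu) := fun t =>
    (hbox t).mono fun ω h => ⟨fun i => (h i).1, fun i => (h i).2⟩
  have hfeasible := integral_mem_fluidFeasibleSet hmeas hbox_Icc
    (by simpa only [Fintype.card_fin] using hcons)
  have hbound := integral_le_card_mul_fluidObjective_integral (A := A) (α := α) hB hφ hφc
    isCompact_Icc (convex_Icc _ _) hmeas hbox_Icc
  simp only [Fintype.card_fin] at hfeasible hbound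
  refine ⟨⟨_, hfeasible⟩, hbound.trans ?_⟩
  gcongr
  exact fluidObjective_le_sSup hφc hfeasible

/-- Proposition 1, `J_opt ≤ J_D`: any random price sequence whose expected
total resource consumption satisfies the inventory constraint achieves expected objective
at most `T` times the optimal value of the static fluid program, whose feasible set is
nonempty. -/
theorem stmt2 {Ω : Type*} [MeasurableSpace Ω] (P : Measure Ω) [IsProbabilityMeasure P]
    (N M T : ℕ) (hN : 1 ≤ N) (hM : 1 ≤ M) (hT : 1 ≤ T)
    (pl pu : ℝ) (hpl : 0 ≤ pl) (hplu : pl ≤ pu)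
    (A : Matrix (Fin M) (Fin N) ℝ) (α : Fin N → ℝ) (B : Matrix (Fin N) (Fin N) ℝ)
    (hB : ∀ z : Fin N → ℝ, z ⬝ᵥ (B *ᵥ z) ≤ 0)
    (γ : Fin M → ℝ) (φ : (Fin M → ℝ) → ℝ)
    (hφ : ConcaveOn ℝ Set.univ φ) (hφc : Continuous φ)
    (p : Fin T → Ω → Fin N → ℝ)
    (hmeas : ∀ t, Measurable (p t))
    (hbox : ∀ t, ∀ᵐ ω ∂P, ∀ i, pl ≤ p t ω i ∧ p t ω i ≤ pu)
    (hcons : ∀ j, (∫ ω, (∑ t, A *ᵥ (α + B *ᵥ p t ω)) j ∂P) ≤ (T : ℝ) * γ j) :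
    ({q : Fin N → ℝ | (∀ i, pl ≤ q i ∧ q i ≤ pu) ∧
        ∀ j, (A *ᵥ (α + B *ᵥ q)) j ≤ γ j}).Nonempty ∧
    (∫ ω, ((∑ t, (p t ω) ⬝ᵥ (α + B *ᵥ p t ω)) +
        (T : ℝ) * φ ((T : ℝ)⁻¹ • ∑ t, A *ᵥ (α + B *ᵥ p t ω))) ∂P)
      ≤ (T : ℝ) * sSup ((fun q : Fin N → ℝ =>
            q ⬝ᵥ (α + B *ᵥ q) + φ (A *ᵥ (α + B *ᵥ q))) ''
          {q : Fin N → ℝ | (∀ i, pl ≤ q i ∧ q i ≤ pu) ∧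
            ∀ j, (A *ᵥ (α + B *ᵥ q)) j ≤ γ j}) :=
  stmt2_general P N M T hT pl pu A α B hB γ φ hφ hφc p hmeas hbox hcons
end

section
/- Let N, M ≥ 1, 0 ≤ p̲ ≤ p̄, A a real M×N matrix, γ ∈ ℝ^M, φ : ℝ^M → ℝ, and μ ∈ ℝ^M. Let α, α̌ ∈ ℝ^N and B, B̌ be real N×N matrices; define D(p) = α + Bp, r(p) = ⟨p, D(p)⟩, Ď(p) = α̌ + B̌p, ř(p) = ⟨p, Ď(p)⟩, the adjusted rewards f(p) = r(p) − ⟨μ, A D(p)⟩ and f̌(p) = ř(p) − ⟨μ, A Ď(p)⟩, and nonnegative functions Δ_r, Δ_f : ℝ^N → ℝ. Assume |ř(p) − r(p)| ≤ 2Δ_r(p) and |f̌(p) − f(p)| ≤ 2Δ_f(p) for all p ∈ [p̲,p̄]^N. Suppose p_t maximizes p ↦ f̌(p) + 2Δ_f(p) over [p̲,p̄]^N and s_t maximizes s ↦ φ(s) + ⟨μ, s⟩ over {s : −γ ≤ s ≤ γ}. Then for every p* ∈ [p̲,p̄]^N with −γ ≤ A D(p*) ≤ γ componentwise: r(p*)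 + φ(A D(p*)) ≤ r(p_t) + φ(s_t) + ⟨μ, −A Ď(p_t) + s_t⟩ + 2(Δ_r(p_t) + Δ_f(p_t)). -/
open Matrix

/-- Step II, Eq. rplushphi: on the event that the estimated revenue and
adjusted reward are within their confidence radii, the fluid optimum is bounded by the
Upper-Confidence-Bound of the dual. -/
theorem stmt5 (N M : ℕ) (hN : 1 ≤ N) (hM : 1 ≤ M)
    (pl pu : ℝ) (hpl : 0 ≤ pl) (hplu : pl ≤ pu)
    (A : Matrix (Fin M) (Fin N) ℝ) (γ : Fin M → ℝ) (φ : (Fin M → ℝ) → ℝ)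
    (μ : Fin M → ℝ)
    (α αc : Fin N → ℝ) (B Bc : Matrix (Fin N) (Fin N) ℝ)
    (Δr Δf : (Fin N → ℝ) → ℝ)
    (hΔr : ∀ q, 0 ≤ Δr q) (hΔf : ∀ q, 0 ≤ Δf q)
    (herrr : ∀ q : Fin N → ℝ, (∀ i, pl ≤ q i ∧ q i ≤ pu) →
      |q ⬝ᵥ (αc + Bc *ᵥ q) - q ⬝ᵥ (α + B *ᵥ q)| ≤ 2 * Δr q)
    (herrf : ∀ q : Fin N → ℝ, (∀ i, pl ≤ q i ∧ q i ≤ pu) →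
      |(q ⬝ᵥ (αc + Bc *ᵥ q) - μ ⬝ᵥ (A *ᵥ (αc + Bc *ᵥ q))) -
        (q ⬝ᵥ (α + B *ᵥ q) - μ ⬝ᵥ (A *ᵥ (α + B *ᵥ q)))| ≤ 2 * Δf q)
    (pt : Fin N → ℝ) (hptbox : ∀ i, pl ≤ pt i ∧ pt i ≤ pu)
    (hptmax : ∀ q : Fin N → ℝ, (∀ i, pl ≤ q i ∧ q i ≤ pu) →
      q ⬝ᵥ (αc + Bc *ᵥ q) - μ ⬝ᵥ (A *ᵥ (αc + Bc *ᵥ q)) + 2 * Δf q ≤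
        pt ⬝ᵥ (αc + Bc *ᵥ pt) - μ ⬝ᵥ (A *ᵥ (αc + Bc *ᵥ pt)) + 2 * Δf pt)
    (st : Fin M → ℝ) (hstbox : ∀ j, -γ j ≤ st j ∧ st j ≤ γ j)
    (hstmax : ∀ s : Fin M → ℝ, (∀ j, -γ j ≤ s j ∧ s j ≤ γ j) →
      φ s + μ ⬝ᵥ s ≤ φ st + μ ⬝ᵥ st) :
    ∀ ps : Fin N → ℝ, (∀ i, pl ≤ ps i ∧ ps i ≤ pu) →
      (∀ j, -γ j ≤ (A *ᵥ (α + B *ᵥ ps)) j ∧ (A *ᵥ (α + B *ᵥ ps)) j ≤ γ j) →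
      ps ⬝ᵥ (α + B *ᵥ ps) + φ (A *ᵥ (α + B *ᵥ ps)) ≤
        pt ⬝ᵥ (α + B *ᵥ pt) + φ st + μ ⬝ᵥ (-(A *ᵥ (αc + Bc *ᵥ pt)) + st) +
          2 * (Δr pt + Δf pt) := by
  intro ps hbox hfeas
  have h1 := hstmax (A *ᵥ (α + B *ᵥ ps)) hfeas
  have h2 := hptmax ps hbox
  have h3 := abs_le.mp (herrf ps hbox)
  have h4 := abs_le.mp (herrr pt hptbox)
  have h5 : μ ⬝ᵥ (-(A *ᵥ (αc + Bc *ᵥ pt)) + st)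
      = -(μ ⬝ᵥ (A *ᵥ (αc + Bc *ᵥ pt))) + μ ⬝ᵥ st := by
    simp [dotProduct_add, dotProduct_neg]
  rw [h5]
  linarith [h3.1, h3.2, h4.1, h4.2]
end

section
/- Let N ≥ 1, τ ≥ 1, p̄ ≥ 1, and p̃_1, …, p̃_τ ∈ ℝ^{N+1} with ‖p̃_t‖_2^2 ≤ (N+1) p̄^2 for all t. Define Λ_1 = (N+1)·I_{N+1} and Λ_{t+1} = Λ_t + p̃_t p̃_tᵀ. Then Σ_{t=1}^τ min{1, √(p̃_tᵀ Λ_t^{-1} p̃_t)} ≤ √( 2 τ (N+1) ln(N + 1 + p̄^2 τ) ). -/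
/-! Elliptical potential argument. By the matrix determinant lemma, with `qₜ = p̃ₜᵀ Λₜ⁻¹ p̃ₜ`,
`log (1 + qₜ)` is the increment `log det Λₜ₊₁ - log det Λₜ`, so these terms telescope. Bounding the determinant by the
`(N+1)`-th power of the trace (which grows by at most `(N+1) p̄²` per step) gives
`log det Λ_{τ+1} ≤ (N+1) log ((N+1) (N+1+p̄²τ))`, and the factor `(N+1)^(N+1)` lost in this crude
bound is exactly `det Λ₁`. Finally `min 1 x ≤ 2 log (1 + x)` and Cauchy–Schwarz on
`∑ √(min 1 qₜ)` turn the bound on `∑ log (1 + qₜ)` into the claim. -/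

open Matrix

theorem Fin.sum_succ_sub_castSucc {M : Type*} [AddCommGroup M] {n : ℕ} (g : Fin (n + 1) → M) :
    ∑ i : Fin n, (g i.succ - g i.castSucc) = g (Fin.last n) - g 0 := by
  induction n with
  | zero => simp
  | succ n ih =>
    rw [Fin.sum_univ_castSucc]
    simp only [Fin.succ_castSucc]
    rw [ih (fun i => g i.castSucc), Fin.succ_last]
    simp

theorem Matrix.det_add_vecMulVec {n R : Type*} [Fintype n] [DecidableEq n] [CommRing R]
    {A : Matrix n n R} (hA : IsUnit A.det) (u v : n → R) :
    (A + vecMulVec u v).det = A.det * (1 + v ⬝ᵥ (A⁻¹ *ᵥ u)) := by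
  rw [vecMulVec_eq Unit, det_add_replicateCol_mul_replicateRow hA,
    det_unique (1 + replicateRow Unit v * A⁻¹ * replicateCol Unit u)]
  simp only [add_apply, one_apply_eq, mul_apply, replicateRow_apply, replicateCol_apply,
    Finset.sum_mul, dotProduct, mulVec, Finset.mul_sum, mul_assoc]
  rw [Finset.sum_comm]

theorem Matrix.PosSemidef.det_le_trace_pow {n : Type*} [Fintype n] [DecidableEq n]
    {A : Matrix n n ℝ} (hA : A.PosSemidef) : A.det ≤ A.trace ^ Fintype.card n := by
  rw [hA.isHermitian.det_eq_prod_eigenvalues, hA.isHermitian.trace_eq_sum_eigenvalues]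
  simp only [RCLike.ofReal_real_eq_id, id]
  calc ∏ i, hA.isHermitian.eigenvalues i ≤ ∏ _i : n, ∑ j, hA.isHermitian.eigenvalues j :=
        Finset.prod_le_prod (fun i _ => hA.eigenvalues_nonneg i) fun i _ =>
          Finset.single_le_sum (fun j _ => hA.eigenvalues_nonneg j) (Finset.mem_univ i)
    _ = _ := by rw [Finset.prod_const, Finset.card_univ]

theorem Real.min_one_le_two_mul_log_one_add {x : ℝ} (hx : 0 ≤ x) :
    min 1 x ≤ 2 * Real.log (1 + x) := by
  have hlog : x / (1 + x) ≤ Real.log (1 + x) := by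
    have := Real.one_sub_inv_le_log_of_pos (by linarith : 0 < 1 + x)
    rwa [inv_eq_one_div, one_sub_div (by linarith), add_sub_cancel_left] at this
  have hmin : min 1 x ≤ 2 * (x / (1 + x)) := by
    rw [mul_div_assoc', le_div_iff₀ (by linarith)]
    rcases le_total x 1 with h | h
    · rw [min_eq_right h]; nlinarith
    · rw [min_eq_left h]; linarith
  linarith

theorem Real.sum_sqrt_le_sqrt_card_mul_sum {ι : Type*} (s : Finset ι) {f : ι → ℝ}
    (hf : ∀ i, 0 ≤ f i) : ∑ i ∈ s, √(f i) ≤ √(s.card * ∑ i ∈ s, f i) := by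
  have := Real.sum_sqrt_mul_sqrt_le s (g := fun _ => 1) hf (fun _ => zero_le_one)
  simp only [Real.sqrt_one, mul_one, Finset.sum_const, nsmul_eq_mul] at this
  rwa [Real.sqrt_mul (by positivity), mul_comm]

theorem Matrix.PosDef.dotProduct_inv_mulVec_self_nonneg {n : Type*} [Fintype n] [DecidableEq n]
    {A : Matrix n n ℝ} (hA : A.PosDef) (v : n → ℝ) : 0 ≤ v ⬝ᵥ (A⁻¹ *ᵥ v) := by
  simpa using hA.inv.posSemidef.dotProduct_mulVec_nonneg v

section RankOneUpdates

variable {n : Type*} [Fintype n] {τ : ℕ} {v : Fin τ → n → ℝ}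
  {Λ : Fin (τ + 1) → Matrix n n ℝ}

theorem posDef_of_rankOne_updates (h0 : (Λ 0).PosDef)
    (hs : ∀ t, Λ t.succ = Λ t.castSucc + vecMulVec (v t) (v t)) (s : Fin (τ + 1)) :
    (Λ s).PosDef := by
  induction s using Fin.induction with
  | zero => exact h0
  | succ t ih =>
    rw [hs t]
    simpa using ih.add_posSemidef (posSemidef_vecMulVec_self_star (v t))

theorem trace_last_of_rankOne_updates
    (hs : ∀ t, Λ t.succ = Λ t.castSucc + vecMulVec (v t) (v t)) :
    (Λ (Fin.last τ)).trace = (Λ 0).trace + ∑ t, v t ⬝ᵥ v t := by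
  rw [← sub_eq_iff_eq_add', ← Fin.sum_succ_sub_castSucc fun s => (Λ s).trace]
  simp [hs]

variable [DecidableEq n]

theorem sum_log_one_add_elliptical_eq (h0 : (Λ 0).PosDef)
    (hs : ∀ t, Λ t.succ = Λ t.castSucc + vecMulVec (v t) (v t)) :
    ∑ t, Real.log (1 + v t ⬝ᵥ ((Λ t.castSucc)⁻¹ *ᵥ v t)) =
      Real.log (Λ (Fin.last τ)).det - Real.log (Λ 0).det := by
  rw [← Fin.sum_succ_sub_castSucc fun s => Real.log (Λ s).det]
  refine Finset.sum_congr rfl fun t _ => ?_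
  have hpd := posDef_of_rankOne_updates h0 hs t.castSucc
  have hq := hpd.dotProduct_inv_mulVec_self_nonneg (v t)
  rw [hs t, det_add_vecMulVec hpd.det_pos.ne'.isUnit, Real.log_mul hpd.det_pos.ne' (by positivity)]
  ring

theorem sum_min_one_sqrt_elliptical_le (h0 : (Λ 0).PosDef)
    (hs : ∀ t, Λ t.succ = Λ t.castSucc + vecMulVec (v t) (v t)) :
    ∑ t, min 1 √(v t ⬝ᵥ ((Λ t.castSucc)⁻¹ *ᵥ v t)) ≤
      √(2 * τ * (Real.log (Λ (Fin.last τ)).det - Real.log (Λ 0).det)) := by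
  set q : Fin τ → ℝ := fun t => v t ⬝ᵥ ((Λ t.castSucc)⁻¹ *ᵥ v t)
  have hq : ∀ t, 0 ≤ q t := fun t =>
    (posDef_of_rankOne_updates h0 hs t.castSucc).dotProduct_inv_mulVec_self_nonneg (v t)
  have hmin : ∀ t, min 1 √(q t) = √(min 1 (q t)) := fun t => by
    rw [Real.sqrt_monotone.map_min, Real.sqrt_one]
  calc ∑ t, min 1 √(q t) = ∑ t, √(min 1 (q t)) := Finset.sum_congr rfl fun t _ => hmin t
    _ ≤ √(τ * ∑ t, min 1 (q t)) := by
      simpa using Real.sum_sqrt_le_sqrt_card_mul_sum Finset.univ fun t => le_min zero_le_one (hq t)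
    _ ≤ √(τ * ∑ t, 2 * Real.log (1 + q t)) := by
      gcongr with t
      exact Real.min_one_le_two_mul_log_one_add (hq t)
    _ = _ := by rw [← Finset.mul_sum, sum_log_one_add_elliptical_eq h0 hs, mul_left_comm, mul_assoc]

end RankOneUpdates

theorem stmt9_general (N τ : ℕ) (pb : ℝ)
    (pt : Fin τ → Fin (N + 1) → ℝ)
    (hpt : ∀ t, pt t ⬝ᵥ pt t ≤ ((N : ℝ) + 1) * pb ^ 2)
    (Λ : Fin (τ + 1) → Matrix (Fin (N + 1)) (Fin (N + 1)) ℝ)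
    (hΛ0 : Λ 0 = ((N : ℝ) + 1) • (1 : Matrix (Fin (N + 1)) (Fin (N + 1)) ℝ))
    (hΛs : ∀ t : Fin τ, Λ t.succ = Λ t.castSucc + Matrix.vecMulVec (pt t) (pt t)) :
    ∑ t : Fin τ, min 1 (Real.sqrt (pt t ⬝ᵥ ((Λ t.castSucc)⁻¹ *ᵥ pt t))) ≤
      Real.sqrt (2 * τ * ((N : ℝ) + 1) * Real.log ((N : ℝ) + 1 + pb ^ 2 * τ)) := by
  have hn : (0 : ℝ) < N + 1 := by positivity
  have h0 : (Λ 0).PosDef := hΛ0 ▸ PosDef.one.smul hn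
  have hlast := posDef_of_rankOne_updates h0 hΛs (Fin.last τ)
  have htrace : (Λ (Fin.last τ)).trace ≤ (N + 1) * (N + 1 + pb ^ 2 * τ) := by
    have hsum : ∑ t, pt t ⬝ᵥ pt t ≤ τ * ((N + 1) * pb ^ 2) := by
      simpa using Finset.sum_le_sum fun t (_ : t ∈ Finset.univ) => hpt t
    rw [trace_last_of_rankOne_updates hΛs, hΛ0, trace_smul, trace_one, Fintype.card_fin,
      smul_eq_mul]
    push_cast
    linarith
  have hdet : (Λ (Fin.last τ)).det ≤ ((N + 1) * (N + 1 + pb ^ 2 * τ)) ^ (N + 1) := by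
    simpa using hlast.posSemidef.det_le_trace_pow.trans
      (pow_le_pow_left₀ hlast.posSemidef.trace_nonneg htrace _)
  have hpotential : Real.log (Λ (Fin.last τ)).det - Real.log (Λ 0).det ≤
      (N + 1) * Real.log (N + 1 + pb ^ 2 * τ) := by
    have hlog := Real.log_le_log hlast.det_pos hdet
    rw [Real.log_pow, Real.log_mul hn.ne' (by positivity)] at hlog
    rw [hΛ0, det_smul, det_one, mul_one, Fintype.card_fin, Real.log_pow]
    push_cast at hlog ⊢
    linarith
  calc _ ≤ _ := sum_min_one_sqrt_elliptical_le h0 hΛs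
    _ ≤ _ := Real.sqrt_le_sqrt (by rw [mul_assoc _ ((N : ℝ) + 1)]; gcongr)

/-- quantitative form of Lemma le:ucb00:
`∑_t min{1, √(p̃_tᵀ Λ_t⁻¹ p̃_t)} ≤ √(2 τ (N+1) ln(N + 1 + p̄² τ))`. -/
theorem stmt9 (N τ : ℕ) (hN : 1 ≤ N) (hτ : 1 ≤ τ) (pb : ℝ) (hpb : 1 ≤ pb)
    (pt : Fin τ → Fin (N + 1) → ℝ)
    (hpt : ∀ t, pt t ⬝ᵥ pt t ≤ ((N : ℝ) + 1) * pb ^ 2)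
    (Λ : Fin (τ + 1) → Matrix (Fin (N + 1)) (Fin (N + 1)) ℝ)
    (hΛ0 : Λ 0 = ((N : ℝ) + 1) • (1 : Matrix (Fin (N + 1)) (Fin (N + 1)) ℝ))
    (hΛs : ∀ t : Fin τ, Λ t.succ = Λ t.castSucc + Matrix.vecMulVec (pt t) (pt t)) :
    ∑ t : Fin τ, min 1 (Real.sqrt (pt t ⬝ᵥ ((Λ t.castSucc)⁻¹ *ᵥ pt t))) ≤
      Real.sqrt (2 * τ * ((N : ℝ) + 1) * Real.log ((N : ℝ) + 1 + pb ^ 2 * τ)) :=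
  stmt9_general N τ pb pt hpt Λ hΛ0 hΛs
end

section
/- Let N ≥ 1, 0 ≤ p̲ ≤ p̄, κ ≥ 0, and let Λ be a real symmetric positive definite (N+1)×(N+1) matrix. For p ∈ ℝ^N write p̃ = (p, 1) ∈ ℝ^{N+1}. Let α, α̂, α̌ ∈ ℝ^N and B, B̂, B̌ be real N×N matrices; form the N×(N+1) augmented matrices ℬ = [B|α], ℬ̂ = [B̂|α̂], ℬ̌ = [B̌|α̌], and define D(p) = ℬ p̃ = α + Bp, Ď(p) = ℬ̌ p̃ = α̌ + B̌p, r(p) = ⟨p, D(p)⟩, ř(p) = ⟨p, Ď(p)⟩. Suppose that for every i ∈ {1,…,N}: ‖Λ^{1/2} (ℬ − ℬ̂)ᵀ e_i‖_2 ≤ κ and ‖Λ^{1/2} (ℬ̌ − ℬ̂)ᵀ e_i‖_2 ≤ κ. Then for every p ∈ [p̲, p̄]^N: ‖Ď(p) − D(p)‖_∞ ≤ 2 √(N+1) κ ‖Λ^{-1/2} p̃‖_∞ and |ř(p) − r(p)| ≤ 2 N p̄ √(N+1) κ ‖Λ^{-1/2} p̃‖_∞. -/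
/-! With `S = Λ^{1/2}`, which is symmetric and invertible, `⟨v, p̃⟩ = ⟨S v, S⁻¹ p̃⟩`. Each
coordinate of `Ď(p) - D(p)` pairs `p̃` with the difference of the rows `(ℬ̌ - ℬ̂)ᵀ e_i` and
`(ℬ - ℬ̂)ᵀ e_i`, whose images under `S` have Euclidean norm at most `κ` each; Cauchy–Schwarz and
`‖x‖₂ ≤ √(N+1) ‖x‖_∞` give the demand bound. The revenue gap is `⟨p, Ď(p) - D(p)⟩` with
`0 ≤ p_i ≤ p̄`. -/

open Matrix

section
open scoped ComplexOrder
/-- The square root of a positive semidefinite matrix, as defined in Mathlib of December 2024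
(removed since; restored here with its old definition). -/
noncomputable def Matrix.PosSemidef.sqrt {n 𝕜 : Type*} [Fintype n] [RCLike 𝕜] [DecidableEq n]
    {A : Matrix n n 𝕜} (hA : A.PosSemidef) : Matrix n n 𝕜 :=
  hA.isHermitian.eigenvectorUnitary.1 *
    diagonal ((↑) ∘ (Real.sqrt ∘ hA.isHermitian.eigenvalues)) *
    (star hA.isHermitian.eigenvectorUnitary : Matrix n n 𝕜)

end

section SqrtReal

variable {n : Type*} [Fintype n] [DecidableEq n] {A : Matrix n n ℝ}

theorem Matrix.PosSemidef.sqrt_transpose (hA : A.PosSemidef) : hA.sqrtᵀ = hA.sqrt := by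
  rw [Matrix.PosSemidef.sqrt, transpose_mul, transpose_mul, diagonal_transpose,
    star_eq_conjTranspose, conjTranspose_eq_transpose_of_trivial, transpose_transpose,
    Matrix.mul_assoc]

theorem Matrix.PosSemidef.sqrt_mul_self (hA : A.PosSemidef) : hA.sqrt * hA.sqrt = A := by
  set U := hA.isHermitian.eigenvectorUnitary
  set D : Matrix n n ℝ := diagonal (RCLike.ofReal ∘ (Real.sqrt ∘ hA.isHermitian.eigenvalues))
  have hU : (star U : Matrix n n ℝ) * U.1 = 1 := Unitary.coe_star_mul_self U
  have hD : D * D = diagonal (RCLike.ofReal ∘ hA.isHermitian.eigenvalues) := by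
    rw [diagonal_mul_diagonal]
    congr 1
    funext i
    simp [Real.mul_self_sqrt (hA.eigenvalues_nonneg i)]
  calc hA.sqrt * hA.sqrt = U.1 * (D * ((star U : Matrix n n ℝ) * U.1) * D) * star U := by
        simp only [Matrix.PosSemidef.sqrt, Matrix.mul_assoc]
        rfl
    _ = A := by
      rw [hU, Matrix.mul_one, hD]
      conv_rhs => rw [hA.isHermitian.spectral_theorem]
      simp [Unitary.conjStarAlgAut_apply]
      rfl

theorem Matrix.PosDef.isUnit_det_sqrt (hA : A.PosDef) : IsUnit hA.posSemidef.sqrt.det := by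
  have hdet : hA.posSemidef.sqrt.det * hA.posSemidef.sqrt.det = A.det := by
    rw [← det_mul, hA.posSemidef.sqrt_mul_self]
  exact isUnit_iff_ne_zero.2 fun h => hA.det_pos.ne' (by rw [← hdet, h, zero_mul])

end SqrtReal

theorem Matrix.dotProduct_eq_mulVec_dotProduct_inv_mulVec {n R : Type*} [Fintype n]
    [DecidableEq n] [CommRing R] {S : Matrix n n R} (hS : Sᵀ = S) (hdet : IsUnit S.det)
    (v x : n → R) : v ⬝ᵥ x = (S *ᵥ v) ⬝ᵥ (S⁻¹ *ᵥ x) := by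
  rw [← vecMul_transpose, hS, ← dotProduct_mulVec, mulVec_mulVec, mul_nonsing_inv S hdet,
    one_mulVec]

section Norms

variable {ι : Type*} [Fintype ι]

theorem Real.sqrt_sum_sq_eq_norm_toLp (v : ι → ℝ) :
    √(∑ i, v i ^ 2) = ‖WithLp.toLp 2 v‖ := by
  simp [EuclideanSpace.norm_eq]

theorem norm_toLp_two_le_sqrt_card_mul_norm (w : ι → ℝ) :
    ‖WithLp.toLp 2 w‖ ≤ √(Fintype.card ι) * ‖w‖ := by
  rw [← Real.sqrt_sum_sq_eq_norm_toLp, ← Real.sqrt_sq (norm_nonneg w), ← Real.sqrt_mul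
    (Nat.cast_nonneg _)]
  refine Real.sqrt_le_sqrt ?_
  calc ∑ i, w i ^ 2 ≤ ∑ _i : ι, ‖w‖ ^ 2 := Finset.sum_le_sum fun i _ =>
        sq_le_sq' (abs_le.1 (norm_le_pi_norm w i)).1 (abs_le.1 (norm_le_pi_norm w i)).2
    _ = Fintype.card ι * ‖w‖ ^ 2 := by simp

theorem abs_dotProduct_le_norm_toLp_mul_sqrt_card_mul_norm (u w : ι → ℝ) :
    |u ⬝ᵥ w| ≤ ‖WithLp.toLp 2 u‖ * (√(Fintype.card ι) * ‖w‖) := by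
  calc |u ⬝ᵥ w| = |inner ℝ (WithLp.toLp 2 w) (WithLp.toLp 2 u)| := by
        rw [EuclideanSpace.inner_toLp_toLp, star_trivial]
    _ ≤ ‖WithLp.toLp 2 u‖ * ‖WithLp.toLp 2 w‖ := by
        rw [mul_comm]; exact abs_real_inner_le_norm _ _
    _ ≤ _ := by gcongr; exact norm_toLp_two_le_sqrt_card_mul_norm w

theorem abs_dotProduct_le_card_mul_mul {p d : ι → ℝ} {c r : ℝ} (hp : ∀ i, |p i| ≤ c)
    (hd : ‖d‖ ≤ r) : |p ⬝ᵥ d| ≤ Fintype.card ι * c * r := by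
  calc |p ⬝ᵥ d| ≤ ∑ i, |p i| * |d i| := by
        simpa only [dotProduct, abs_mul] using Finset.abs_sum_le_sum_abs (fun i => p i * d i) _
    _ ≤ ∑ _i : ι, c * r := Finset.sum_le_sum fun i _ => mul_le_mul (hp i)
        ((norm_le_pi_norm d i).trans hd) (abs_nonneg _) ((abs_nonneg _).trans (hp i))
    _ = Fintype.card ι * c * r := by simp [mul_assoc]

end Norms

theorem Fin.snoc_dotProduct_snoc_one {n : ℕ} {R : Type*} [NonAssocSemiring R] (u p : Fin n → R)
    (a : R) : (Fin.snoc u a : Fin (n + 1) → R) ⬝ᵥ Fin.snoc p 1 = u ⬝ᵥ p + a := by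
  simp [dotProduct, Fin.sum_univ_castSucc]

theorem Matrix.add_mulVec_apply_eq_snoc_dotProduct {m : Type*} {n : ℕ} {R : Type*} [CommSemiring R]
    (α : m → R) (B : Matrix m (Fin n) R) (p : Fin n → R) (i : m) :
    (α + B *ᵥ p) i = (Fin.snoc (B i) (α i) : Fin (n + 1) → R) ⬝ᵥ Fin.snoc p 1 := by
  rw [Fin.snoc_dotProduct_snoc_one, Pi.add_apply, add_comm]
  rfl

theorem Matrix.add_mulVec_sub_add_mulVec_apply {m : Type*} {n : ℕ} {R : Type*} [CommRing R]
    (α α' αh : m → R) (B B' Bh : Matrix m (Fin n) R) (p : Fin n → R) (i : m) :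
    ((α' + B' *ᵥ p) - (α + B *ᵥ p)) i =
      (Fin.snoc (fun j => B' i j - Bh i j) (α' i - αh i) -
        Fin.snoc (fun j => B i j - Bh i j) (α i - αh i) : Fin (n + 1) → R) ⬝ᵥ Fin.snoc p 1 := by
  rw [Pi.sub_apply, add_mulVec_apply_eq_snoc_dotProduct, add_mulVec_apply_eq_snoc_dotProduct,
    ← sub_dotProduct]
  congr 1
  ext j
  refine Fin.lastCases ?_ (fun k => ?_) j <;> simp

theorem Matrix.abs_sub_dotProduct_le_of_norm_mulVec_le {n : Type*} [Fintype n] [DecidableEq n]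
    {S : Matrix n n ℝ} (hS : Sᵀ = S) (hdet : IsUnit S.det) {e₁ e₂ : n → ℝ} {κ : ℝ}
    (h₁ : ‖WithLp.toLp 2 (S *ᵥ e₁)‖ ≤ κ) (h₂ : ‖WithLp.toLp 2 (S *ᵥ e₂)‖ ≤ κ) (x : n → ℝ) :
    |(e₁ - e₂) ⬝ᵥ x| ≤ 2 * κ * (√(Fintype.card n) * ‖S⁻¹ *ᵥ x‖) := by
  rw [dotProduct_eq_mulVec_dotProduct_inv_mulVec hS hdet]
  refine (abs_dotProduct_le_norm_toLp_mul_sqrt_card_mul_norm _ _).trans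
    (mul_le_mul_of_nonneg_right ?_ (by positivity))
  rw [mulVec_sub, WithLp.toLp_sub]
  linarith [norm_sub_le (WithLp.toLp 2 (S *ᵥ e₁)) (WithLp.toLp 2 (S *ᵥ e₂))]

theorem stmt14_general (N : ℕ) (pl pu : ℝ) (hpl : 0 ≤ pl)
    (κ : ℝ) (hκ : 0 ≤ κ)
    (Λ : Matrix (Fin (N + 1)) (Fin (N + 1)) ℝ) (hΛ : Λ.PosDef)
    (α αh αc : Fin N → ℝ) (B Bh Bc : Matrix (Fin N) (Fin N) ℝ)
    (htrue : ∀ i : Fin N,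
      Real.sqrt (∑ j, ((hΛ.posSemidef.sqrt *ᵥ
        Fin.snoc (fun j => B i j - Bh i j) (α i - αh i)) j) ^ 2) ≤ κ)
    (hcheck : ∀ i : Fin N,
      Real.sqrt (∑ j, ((hΛ.posSemidef.sqrt *ᵥ
        Fin.snoc (fun j => Bc i j - Bh i j) (αc i - αh i)) j) ^ 2) ≤ κ) :
    ∀ p : Fin N → ℝ, (∀ i, pl ≤ p i ∧ p i ≤ pu) →
      ‖(αc + Bc *ᵥ p) - (α + B *ᵥ p)‖ ≤
        2 * Real.sqrt ((N : ℝ) + 1) * κ * ‖(hΛ.posSemidef.sqrt)⁻¹ *ᵥ Fin.snoc p 1‖ ∧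
      |p ⬝ᵥ (αc + Bc *ᵥ p) - p ⬝ᵥ (α + B *ᵥ p)| ≤
        2 * N * pu * Real.sqrt ((N : ℝ) + 1) * κ *
          ‖(hΛ.posSemidef.sqrt)⁻¹ *ᵥ Fin.snoc p 1‖ := by
  intro p hp
  have hdemand : ‖(αc + Bc *ᵥ p) - (α + B *ᵥ p)‖ ≤
      2 * Real.sqrt ((N : ℝ) + 1) * κ * ‖(hΛ.posSemidef.sqrt)⁻¹ *ᵥ Fin.snoc p 1‖ := by
    refine (pi_norm_le_iff_of_nonneg (by positivity)).2 fun i => ?_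
    have h := abs_sub_dotProduct_le_of_norm_mulVec_le hΛ.posSemidef.sqrt_transpose
      hΛ.isUnit_det_sqrt ((Real.sqrt_sum_sq_eq_norm_toLp _).symm.trans_le (hcheck i))
      ((Real.sqrt_sum_sq_eq_norm_toLp _).symm.trans_le (htrue i)) (Fin.snoc p 1)
    rw [Fintype.card_fin, Nat.cast_add, Nat.cast_one] at h
    rw [Real.norm_eq_abs, add_mulVec_sub_add_mulVec_apply α αc αh B Bc Bh]
    exact h.trans_eq (by ring)
  refine ⟨hdemand, ?_⟩
  rw [← dotProduct_sub]
  calc _ ≤ N * pu * (2 * Real.sqrt ((N : ℝ) + 1) * κ *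
        ‖(hΛ.posSemidef.sqrt)⁻¹ *ᵥ Fin.snoc p 1‖) := by
        simpa only [Fintype.card_fin] using abs_dotProduct_le_card_mul_mul (fun i =>
          (abs_of_nonneg (hpl.trans (hp i).1)).trans_le (hp i).2) hdemand
    _ = _ := by ring

/-- deterministic core of Lemma 1 / Corollary 1: if both the true augmented
parameter matrix `[B|α]` and the projected estimate `[B̌|α̌]` are within row-wise distance
`κ` of `[B̂|α̂]` in the `‖Λ^{1/2}·‖₂` sense, then the estimated demand and revenue are
within the `ℓ∞`-norm-based confidence radii of the true ones, uniformly over the price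
box. -/
theorem stmt14 (N : ℕ) (hN : 1 ≤ N) (pl pu : ℝ) (hpl : 0 ≤ pl) (hplu : pl ≤ pu)
    (κ : ℝ) (hκ : 0 ≤ κ)
    (Λ : Matrix (Fin (N + 1)) (Fin (N + 1)) ℝ) (hΛ : Λ.PosDef)
    (α αh αc : Fin N → ℝ) (B Bh Bc : Matrix (Fin N) (Fin N) ℝ)
    (htrue : ∀ i : Fin N,
      Real.sqrt (∑ j, ((hΛ.posSemidef.sqrt *ᵥ
        Fin.snoc (fun j => B i j - Bh i j) (α i - αh i)) j) ^ 2) ≤ κ)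
    (hcheck : ∀ i : Fin N,
      Real.sqrt (∑ j, ((hΛ.posSemidef.sqrt *ᵥ
        Fin.snoc (fun j => Bc i j - Bh i j) (αc i - αh i)) j) ^ 2) ≤ κ) :
    ∀ p : Fin N → ℝ, (∀ i, pl ≤ p i ∧ p i ≤ pu) →
      ‖(αc + Bc *ᵥ p) - (α + B *ᵥ p)‖ ≤
        2 * Real.sqrt ((N : ℝ) + 1) * κ * ‖(hΛ.posSemidef.sqrt)⁻¹ *ᵥ Fin.snoc p 1‖ ∧
      |p ⬝ᵥ (αc + Bc *ᵥ p) - p ⬝ᵥ (α + B *ᵥ p)| ≤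
        2 * N * pu * Real.sqrt ((N : ℝ) + 1) * κ *
          ‖(hΛ.posSemidef.sqrt)⁻¹ *ᵥ Fin.snoc p 1‖ :=
  stmt14_general N pl pu hpl κ hκ Λ hΛ α αh αc B Bh Bc htrue hcheck
end

section
/- Let M ≥ 1, C > 0, G ≥ 0, η > 0, T ≥ 1, and let g_1, …, g_T ∈ ℝ^M with ‖g_t‖_∞ ≤ G for all t. Define the sequences μ_t^+, μ_t^− ∈ ℝ^M by μ_1^+ = μ_1^− = (C/M, …, C/M) and, for 1 ≤ t ≤ T and each coordinate i: Z_t = Σ_{i=1}^M ( [μ_t^+]_i exp(−ηC [g_t]_i) + [μ_t^−]_i exp(ηC [g_t]_i) ), [μ_{t+1}^+]_i = C [μ_t^+]_i exp(−ηC [g_t]_i) / Z_t, [μ_{t+1}^−]_i = C [μ_t^−]_i exp(ηC [g_t]_i) / Z_t; and set μ_t = μ_t^+ − μ_t^−. Then for every μ ∈ ℝ^M with ‖μ‖_1 ≤ C: Σ_{t=1}^T ⟨μ_t, g_t⟩ ≤ Σ_{t=1}^T ⟨μ, g_t⟩ + ln(2M)/η + η C^2 G^2 T / 2. -/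
/-!
Run with learning rate `ηC`, EG± is the Hedge (exponential weights) algorithm on the `2M` experts
`±eᵢ`. After the first step its weights have total mass `C`, so `⟨μₜ, gₜ⟩` is `C` times the
expected loss of Hedge (at `t = 0` both vanish by symmetry). Hoeffding's lemma bounds the one-step
change of the potential `log ∑ weights`, which telescopes to Hedge's regret
`log (2M) / (ηC) + ηC (2G)² T / 8` against each expert; by Hölder's inequality, any `μ` with
`‖μ‖₁ ≤ C` does at least as well as `C` times the best expert.
-/

open MeasureTheory ProbabilityTheory Real

theorem sum_mul_exp_le_of_mem_Icc {ι : Type*} [Fintype ι] {p x : ι → ℝ} {a b : ℝ}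
    (hp : ∀ i, 0 ≤ p i) (hp1 : ∑ i, p i = 1) (hx : ∀ i, x i ∈ Set.Icc a b) (s : ℝ) :
    ∑ i, p i * exp (s * x i) ≤ exp (s * ∑ i, p i * x i + (b - a) ^ 2 * s ^ 2 / 8) := by
  let _ : MeasurableSpace ι := ⊤
  have hP : ∑ i, ENNReal.ofReal (p i) = 1 := by
    rw [← ENNReal.ofReal_sum_of_nonneg fun i _ => hp i, hp1, ENNReal.ofReal_one]
  let P := PMF.ofFintype _ hP
  have hint : ∀ f : ι → ℝ, ∫ i, f i ∂P.toMeasure = ∑ i, p i * f i := fun f => by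
    simp [P, PMF.integral_eq_sum, ENNReal.toReal_ofReal (hp _)]
  have h := (hasSubgaussianMGF_of_mem_Icc (μ := P.toMeasure) (X := x)
    (Measurable.of_discrete).aemeasurable (ae_of_all _ hx)).mgf_le s
  rw [mgf, hint, hint] at h
  have hc : (((‖b - a‖₊ / 2) ^ 2 : NNReal) : ℝ) * s ^ 2 / 2 = (b - a) ^ 2 * s ^ 2 / 8 := by
    push_cast
    rw [Real.norm_eq_abs, div_pow, sq_abs]
    ring
  have hsplit : ∑ i, p i * exp (s * (x i - ∑ j, p j * x j)) =
      (∑ i, p i * exp (s * x i)) * exp (-(s * ∑ j, p j * x j)) := by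
    rw [Finset.sum_mul]
    refine Finset.sum_congr rfl fun i _ => ?_
    rw [mul_assoc, ← exp_add]
    ring_nf
  rwa [hsplit, hc, ← le_div_iff₀ (exp_pos _), ← exp_sub, sub_neg_eq_add, add_comm] at h

namespace Hedge

noncomputable section

variable {ι : Type*} (η : ℝ) (ℓ : ℕ → ι → ℝ)

def cumLoss (t : ℕ) (i : ι) : ℝ := ∑ s ∈ Finset.range t, ℓ s i

def weight (t : ℕ) (i : ι) : ℝ := exp (-(η * cumLoss ℓ t i))

lemma weight_pos (t : ℕ) (i : ι) : 0 < weight η ℓ t i := exp_pos _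

lemma weight_zero (i : ι) : weight η ℓ 0 i = 1 := by simp [weight, cumLoss]

lemma weight_succ (t : ℕ) (i : ι) :
    weight η ℓ (t + 1) i = weight η ℓ t i * exp (-(η * ℓ t i)) := by
  rw [weight, weight, ← exp_add, cumLoss, Finset.sum_range_succ, ← cumLoss]
  ring_nf

variable [Fintype ι]

def prob (t : ℕ) (i : ι) : ℝ := weight η ℓ t i / ∑ j, weight η ℓ t j

def expectedLoss (t : ℕ) : ℝ := ∑ i, prob η ℓ t i * ℓ t i

def potential (t : ℕ) : ℝ := log (∑ i, weight η ℓ t i)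

lemma potential_zero : potential η ℓ 0 = log (Fintype.card ι) := by
  simp [potential, weight_zero]

lemma expectedLoss_zero : expectedLoss η ℓ 0 = (Fintype.card ι : ℝ)⁻¹ * ∑ i, ℓ 0 i := by
  simp [expectedLoss, prob, weight_zero, Finset.mul_sum]

lemma neg_mul_cumLoss_le_potential (t : ℕ) (k : ι) : -(η * cumLoss ℓ t k) ≤ potential η ℓ t := by
  rw [← log_exp (-(η * cumLoss ℓ t k))]
  exact log_le_log (weight_pos η ℓ t k)
    (Finset.single_le_sum (fun i _ => (weight_pos η ℓ t i).le) (Finset.mem_univ k))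

lemma normalized_update_eq_mul_prob {t : ℕ} {w : ι → ℝ} {κ : ℝ} (hκ : κ ≠ 0)
    (hw : ∀ i, w i = κ * weight η ℓ t i) (C : ℝ) (i : ι) :
    C * w i * exp (-(η * ℓ t i)) / ∑ j, w j * exp (-(η * ℓ t j)) = C * prob η ℓ (t + 1) i := by
  simp only [hw, prob, weight_succ, mul_assoc, ← Finset.mul_sum]
  field_simp

variable [Nonempty ι]

lemma sum_weight_pos (t : ℕ) : 0 < ∑ i, weight η ℓ t i :=
  Finset.sum_pos (fun i _ => weight_pos η ℓ t i) Finset.univ_nonempty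

lemma prob_pos (t : ℕ) (i : ι) : 0 < prob η ℓ t i :=
  div_pos (weight_pos η ℓ t i) (sum_weight_pos η ℓ t)

lemma sum_prob (t : ℕ) : ∑ i, prob η ℓ t i = 1 := by
  simp only [prob]
  rw [← Finset.sum_div, div_self (sum_weight_pos η ℓ t).ne']

lemma potential_succ_le {a b : ℝ} {t : ℕ} (hℓ : ∀ i, ℓ t i ∈ Set.Icc a b) :
    potential η ℓ (t + 1) ≤ potential η ℓ t - η * expectedLoss η ℓ t + (b - a) ^ 2 * η ^ 2 / 8 := by
  have hsum : ∑ i, weight η ℓ (t + 1) i =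
      (∑ i, weight η ℓ t i) * ∑ i, prob η ℓ t i * exp (-η * ℓ t i) := by
    simp only [weight_succ, prob, Finset.mul_sum]
    refine Finset.sum_congr rfl fun i _ => ?_
    field_simp [(sum_weight_pos η ℓ t).ne']
  have hoeff := sum_mul_exp_le_of_mem_Icc (fun i => (prob_pos η ℓ t i).le) (sum_prob η ℓ t) hℓ (-η)
  have hpos : 0 < ∑ i, prob η ℓ t i * exp (-η * ℓ t i) :=
    Finset.sum_pos (fun i _ => mul_pos (prob_pos η ℓ t i) (exp_pos _)) Finset.univ_nonempty
  rw [potential, hsum, log_mul (sum_weight_pos η ℓ t).ne' hpos.ne', ← potential]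
  have := (log_le_log hpos hoeff).trans_eq (log_exp _)
  rw [expectedLoss]
  linarith

lemma potential_le (T : ℕ) {a b : ℝ} (hℓ : ∀ t < T, ∀ i, ℓ t i ∈ Set.Icc a b) :
    potential η ℓ T ≤ log (Fintype.card ι) - η * ∑ t ∈ Finset.range T, expectedLoss η ℓ t +
      T * ((b - a) ^ 2 * η ^ 2 / 8) := by
  induction T with
  | zero => simp [potential_zero]
  | succ T ih =>
    have := potential_succ_le η ℓ (hℓ T (Nat.lt_succ_self T))
    have := ih fun t ht => hℓ t (ht.trans (Nat.lt_succ_self T))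
    rw [Finset.sum_range_succ]
    push_cast
    linarith

theorem sum_expectedLoss_le (hη : 0 < η) (T : ℕ) {a b : ℝ}
    (hℓ : ∀ t < T, ∀ i, ℓ t i ∈ Set.Icc a b) (k : ι) :
    ∑ t ∈ Finset.range T, expectedLoss η ℓ t ≤
      cumLoss ℓ T k + log (Fintype.card ι) / η + η * (b - a) ^ 2 * T / 8 := by
  have hup := potential_le η ℓ T hℓ
  have hlow := neg_mul_cumLoss_le_potential η ℓ T k
  have key : η * ∑ t ∈ Finset.range T, expectedLoss η ℓ t ≤
      η * (cumLoss ℓ T k + log (Fintype.card ι) / η + η * (b - a) ^ 2 * T / 8) := by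
    rw [mul_add, mul_add, mul_div_cancel₀ _ hη.ne']
    linarith
  exact le_of_mul_le_mul_left key hη

theorem eq_mul_prob_of_normalized_update {T : ℕ} {w : ℕ → ι → ℝ} {C c : ℝ} (hC : C ≠ 0)
    (hc : c ≠ 0) (h0 : ∀ i, w 0 i = c)
    (hw : ∀ t < T, ∀ i, w (t + 1) i =
      C * w t i * exp (-(η * ℓ t i)) / ∑ j, w t j * exp (-(η * ℓ t j))) :
    ∀ t < T, ∀ i, w (t + 1) i = C * prob η ℓ (t + 1) i := by
  intro t
  induction t with
  | zero =>
    intro ht i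
    rw [hw 0 ht i]
    exact normalized_update_eq_mul_prob η ℓ hc (fun i => by simp [h0, weight_zero]) C i
  | succ t ih =>
    intro ht i
    rw [hw (t + 1) ht i]
    refine normalized_update_eq_mul_prob η ℓ (div_ne_zero hC (sum_weight_pos η ℓ (t + 1)).ne')
      (fun j => ?_) C i
    rw [ih (by omega) j, prob, mul_div_assoc']
    ring

end

end Hedge

section EGpm

variable {ι : Type*}

-- Expert `inl i` plays `eᵢ` and expert `inr i` plays `-eᵢ`.
def signedLoss (g : ℕ → ι → ℝ) (t : ℕ) : ι ⊕ ι → ℝ := Sum.elim (g t) (-g t)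

lemma signedLoss_mem_Icc {g : ℕ → ι → ℝ} {G : ℝ} {t : ℕ} (hg : ∀ i, |g t i| ≤ G) (k : ι ⊕ ι) :
    signedLoss g t k ∈ Set.Icc (-G) G := by
  rcases k with i | i <;> simp [signedLoss, abs_le.mp (hg i), neg_le]

lemma cumLoss_signedLoss (g : ℕ → ι → ℝ) (T : ℕ) :
    Hedge.cumLoss (signedLoss g) T =
      Sum.elim (∑ t ∈ Finset.range T, g t) (-∑ t ∈ Finset.range T, g t) := by
  ext (i | i) <;> simp [Hedge.cumLoss, signedLoss, Finset.sum_apply]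

variable [Fintype ι]

lemma exists_mul_sumElim_le_dotProduct [Nonempty ι] {C : ℝ} {μ : ι → ℝ} (hμ : ∑ i, |μ i| ≤ C)
    (S : ι → ℝ) : ∃ k, C * Sum.elim S (-S) k ≤ μ ⬝ᵥ S := by
  obtain ⟨i, -, hi⟩ := Finset.exists_max_image Finset.univ (fun i => |S i|) Finset.univ_nonempty
  have hbound : -(C * |S i|) ≤ μ ⬝ᵥ S :=
    calc -(C * |S i|) ≤ -∑ j, |μ j| * |S i| := by
          rw [← Finset.sum_mul]
          exact neg_le_neg (mul_le_mul_of_nonneg_right hμ (abs_nonneg _))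
      _ ≤ -∑ j, |μ j * S j| := by
          refine neg_le_neg (Finset.sum_le_sum fun j _ => ?_)
          rw [abs_mul]
          exact mul_le_mul_of_nonneg_left (hi j (Finset.mem_univ j)) (abs_nonneg _)
      _ ≤ μ ⬝ᵥ S := (neg_le_neg (Finset.abs_sum_le_sum_abs _ _)).trans (neg_abs_le _)
  rcases le_or_gt 0 (S i) with hS | hS
  · exact ⟨.inr i, by simpa [abs_of_nonneg hS] using hbound⟩
  · exact ⟨.inl i, by simpa [abs_of_neg hS] using hbound⟩

theorem dotProduct_eq_mul_expectedLoss [Nonempty ι] {T : ℕ} {C c η : ℝ} (hC : C ≠ 0) (hc : c ≠ 0)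
    {g μp μm : ℕ → ι → ℝ} (hinit : ∀ i, μp 0 i = c ∧ μm 0 i = c)
    (hrecp : ∀ t < T, ∀ i, μp (t + 1) i =
      C * μp t i * exp (-(η * C * g t i)) /
        (∑ j, (μp t j * exp (-(η * C * g t j)) + μm t j * exp (η * C * g t j))))
    (hrecm : ∀ t < T, ∀ i, μm (t + 1) i =
      C * μm t i * exp (η * C * g t i) /
        (∑ j, (μp t j * exp (-(η * C * g t j)) + μm t j * exp (η * C * g t j)))) :
    ∀ t < T, (μp t - μm t) ⬝ᵥ g t = C * Hedge.expectedLoss (η * C) (signedLoss g) t := by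
  set w : ℕ → ι ⊕ ι → ℝ := fun t => Sum.elim (μp t) (μm t)
  have hw : ∀ t < T, ∀ k, w (t + 1) k = C * w t k * exp (-(η * C * signedLoss g t k)) /
      ∑ j, w t j * exp (-(η * C * signedLoss g t j)) := by
    intro t ht k
    rw [Fintype.sum_sum_type, ← Finset.sum_add_distrib]
    rcases k with i | i
    · simpa [w, signedLoss] using hrecp t ht i
    · simpa [w, signedLoss] using hrecm t ht i
  have hpw := Hedge.eq_mul_prob_of_normalized_update (η * C) (signedLoss g) hC hc
    (fun k => by rcases k with i | i <;> simp [w, hinit]) hw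
  rintro (_ | t) ht
  · have h0 : μp 0 = μm 0 := funext fun i => (hinit i).1.trans (hinit i).2.symm
    simp [h0, Hedge.expectedLoss_zero, signedLoss, Fintype.sum_sum_type]
  · calc (μp (t + 1) - μm (t + 1)) ⬝ᵥ g (t + 1) = ∑ k, w (t + 1) k * signedLoss g (t + 1) k := by
          rw [sub_dotProduct, Fintype.sum_sum_type]
          simp [w, signedLoss, dotProduct, sub_eq_add_neg]
      _ = C * Hedge.expectedLoss (η * C) (signedLoss g) (t + 1) := by
          simp only [hpw t (by omega), Hedge.expectedLoss, Finset.mul_sum, mul_assoc]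

end EGpm

theorem stmt15_general (M : ℕ) (hM : 1 ≤ M) (C G η : ℝ) (hC : 0 < C) (hη : 0 < η)
    (T : ℕ)
    (g : ℕ → Fin M → ℝ) (hg : ∀ t < T, ∀ i, |g t i| ≤ G)
    (μp μm : ℕ → Fin M → ℝ)
    (hinit : ∀ i, μp 0 i = C / M ∧ μm 0 i = C / M)
    (hrecp : ∀ t < T, ∀ i, μp (t + 1) i =
      C * μp t i * Real.exp (-(η * C * g t i)) /
        (∑ j, (μp t j * Real.exp (-(η * C * g t j)) + μm t j * Real.exp (η * C * g t j))))
    (hrecm : ∀ t < T, ∀ i, μm (t + 1) i =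
      C * μm t i * Real.exp (η * C * g t i) /
        (∑ j, (μp t j * Real.exp (-(η * C * g t j)) + μm t j * Real.exp (η * C * g t j)))) :
    ∀ μ : Fin M → ℝ, (∑ i, |μ i|) ≤ C →
      ∑ t ∈ Finset.range T, (μp t - μm t) ⬝ᵥ g t ≤
        ∑ t ∈ Finset.range T, μ ⬝ᵥ g t +
          Real.log (2 * M) / η + η * C ^ 2 * G ^ 2 * T / 2 := by
  intro μ hμ
  have : Nonempty (Fin M) := ⟨⟨0, hM⟩⟩
  have hCM : C / M ≠ 0 := div_ne_zero hC.ne' (Nat.cast_ne_zero.mpr (by omega))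
  have hloss := dotProduct_eq_mul_expectedLoss hC.ne' hCM hinit hrecp hrecm
  have hregret := Hedge.sum_expectedLoss_le (η * C) (signedLoss g) (by positivity) T
    (fun t ht => signedLoss_mem_Icc (hg t ht))
  obtain ⟨k, hk⟩ := exists_mul_sumElim_le_dotProduct hμ (∑ t ∈ Finset.range T, g t)
  rw [Finset.sum_congr rfl fun t ht => hloss t (Finset.mem_range.1 ht), ← Finset.mul_sum,
    ← dotProduct_sum]
  calc C * ∑ t ∈ Finset.range T, Hedge.expectedLoss (η * C) (signedLoss g) t
      ≤ C * (Hedge.cumLoss (signedLoss g) T k + log (Fintype.card (Fin M ⊕ Fin M)) / (η * C) +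
          η * C * (G - -G) ^ 2 * T / 8) := mul_le_mul_of_nonneg_left (hregret k) hC.le
    _ = C * Hedge.cumLoss (signedLoss g) T k + log (2 * M) / η + η * C ^ 2 * G ^ 2 * T / 2 := by
      rw [Fintype.card_sum, Fintype.card_fin, Nat.cast_add, ← two_mul]
      field_simp
      ring
    _ ≤ _ := by
      rw [cumLoss_signedLoss]
      linarith

/-- regret of the EG± mirror descent solver, Algorithm 2: the iterates
`μ_t = μ_t⁺ − μ_t⁻` of the exponentiated gradient algorithm with positive and negative
weights over the dual space `{μ : ‖μ‖₁ ≤ C}` satisfy the regret bound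
`∑_t ⟨μ_t, g_t⟩ ≤ ∑_t ⟨μ, g_t⟩ + ln(2M)/η + ηC²G²T/2`. -/
theorem stmt15 (M : ℕ) (hM : 1 ≤ M) (C G η : ℝ) (hC : 0 < C) (hG : 0 ≤ G) (hη : 0 < η)
    (T : ℕ) (hT : 1 ≤ T)
    (g : ℕ → Fin M → ℝ) (hg : ∀ t < T, ∀ i, |g t i| ≤ G)
    (μp μm : ℕ → Fin M → ℝ)
    (hinit : ∀ i, μp 0 i = C / M ∧ μm 0 i = C / M)
    (hrecp : ∀ t < T, ∀ i, μp (t + 1) i =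
      C * μp t i * Real.exp (-(η * C * g t i)) /
        (∑ j, (μp t j * Real.exp (-(η * C * g t j)) + μm t j * Real.exp (η * C * g t j))))
    (hrecm : ∀ t < T, ∀ i, μm (t + 1) i =
      C * μm t i * Real.exp (η * C * g t i) /
        (∑ j, (μp t j * Real.exp (-(η * C * g t j)) + μm t j * Real.exp (η * C * g t j)))) :
    ∀ μ : Fin M → ℝ, (∑ i, |μ i|) ≤ C →
      ∑ t ∈ Finset.range T, (μp t - μm t) ⬝ᵥ g t ≤
        ∑ t ∈ Finset.range T, μ ⬝ᵥ g t +
          Real.log (2 * M) / η + η * C ^ 2 * G ^ 2 * T / 2 :=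
  stmt15_general M hM C G η hC hη T g hg μp μm hinit hrecp hrecm
end
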